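/- arXiv:2304.11803 — 4 statements merged into one kernel-verified Lean document; each statement's English description precedes it below -/
import Mathlib

section
/- Let (a_n)_{n≥0} be an ultimately periodic sequence in O_K with preperiod a_0,…,a_N and period a_{N+1},…,a_{N+k}, and let E = M(a_0,…,a_N)·M(a_{N+1},…,a_{N+k})·M(a_0,…,a_N)^{-1} with entries E_11, E_12, E_21, E_22 ∈ K. Set Δ = (E_22 − E_11)² + 4·E_12·E_21. If Δ > 0 and Δ is not the square of an element of K, then the continued fraction [a_0,a_1,…] converges to some real number. If Δ < 0, then there is no real number to which the continued fraction converges. -/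
open Filter Topology

/-- Numerator continuants: `cfP a (n+1) = Pₙ`, with `cfP a 0 = P₋₁ = 1`. -/
def cfP {R : Type*} [CommRing R] (a : ℕ → R) : ℕ → R
  | 0 => 1
  | 1 => a 0
  | n + 2 => a (n + 1) * cfP a (n + 1) + cfP a n

/-- Denominator continuants: `cfQ a (n+1) = Qₙ`, with `cfQ a 0 = Q₋₁ = 0`. -/
def cfQ {R : Type*} [CommRing R] (a : ℕ → R) : ℕ → R
  | 0 => 0
  | 1 => 1
  | n + 2 => a (n + 1) * cfQ a (n + 1) + cfQ a n

/-- The sequence `a` is ultimately periodic. -/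
def UltimatelyPeriodic {α : Type*} (a : ℕ → α) : Prop :=
  ∃ N k : ℕ, 1 ≤ k ∧ ∀ n > N, a (n + k) = a n

/-- The continued fraction `[a₀, a₁, …]` converges to `ξ`:
`Qₙ ≠ 0` for all sufficiently large `n` and `Pₙ/Qₙ → ξ`. -/
def CFConvergesTo (a : ℕ → ℝ) (ξ : ℝ) : Prop :=
  (∃ N, ∀ n ≥ N, cfQ a (n + 1) ≠ 0) ∧
    Tendsto (fun n => cfP a (n + 1) / cfQ a (n + 1)) atTop (nhds ξ)

/-- Product of the matrices `D(α) = [[α,1],[1,0]]` over a word. -/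
def cfM {K : Type*} [CommRing K] (l : List K) : Matrix (Fin 2) (Fin 2) K :=
  (l.map (fun α => !![α, 1; 1, 0])).prod

/-!
Past the preperiod, the product `W` of `k` consecutive matrices `D(aᵢ)` is conjugate to `E`, so
it has determinant `(-1)ᵏ` and some trace `t` with `t² - 4(-1)ᵏ = Δ`. Since the partial products
have bottom row `(Qₙ, Qₙ₋₁)`, Cayley–Hamilton gives `Q_{n+2k} = t Q_{n+k} - (-1)ᵏ Qₙ`.
Consecutive convergents differ by `1 / |Qₙ Qₙ₊₁|`.

If `Δ < 0`, then `k` is even and `|t| < 2`, so the positive definite form `x² - t x y + y²`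
is conserved along `(Qₙ, Q_{n+k})`: the denominators stay bounded and the convergents cannot
converge. If `Δ > 0` is not a square in `K`, the roots `λ, μ` of `X² - t X + (-1)ᵏ` are real,
not in `K`, and `|λ| > 1 ≥ |μ|`. As `Qₙ, Q_{n+k} ∈ K`, we get `Q_{n+k} ≠ μ Qₙ` (if both vanish,
`W` is triangular and `Δ` is a square), so `Qₙ` grows geometrically and the convergents form a
Cauchy sequence.
-/

section Continuants

variable {R : Type*} [CommRing R]

theorem cfM_append (l₁ l₂ : List R) : cfM (l₁ ++ l₂) = cfM l₁ * cfM l₂ := by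
  simp [cfM]

theorem det_cfM (l : List R) : (cfM l).det = (-1) ^ l.length := by
  induction l with
  | nil => simp [cfM]
  | cons x l ih =>
    rw [← List.singleton_append, cfM_append, Matrix.det_mul, ih]
    simp [cfM, Matrix.det_fin_two_of, pow_succ']

theorem cfM_range_succ (a : ℕ → R) (n : ℕ) :
    cfM ((List.range (n + 1)).map a) = !![cfP a (n + 1), cfP a n; cfQ a (n + 1), cfQ a n] := by
  induction n with
  | zero => simp [cfM, cfP, cfQ]
  | succ n ih =>
    rw [List.range_succ, List.map_append, cfM_append, ih]
    ext i j
    fin_cases i <;> fin_cases j <;> simp [cfM, cfP, cfQ] <;> ring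

theorem cfM_range_apply_one_zero (a : ℕ → R) (n : ℕ) :
    cfM ((List.range n).map a) 1 0 = cfQ a n := by
  cases n with
  | zero => simp [cfM, cfQ]
  | succ n => simp [cfM_range_succ]

theorem cfP_mul_cfQ_sub_cfP_mul_cfQ (a : ℕ → R) (n : ℕ) :
    cfP a (n + 1) * cfQ a n - cfP a n * cfQ a (n + 1) = (-1) ^ (n + 1) := by
  simpa [cfM_range_succ, Matrix.det_fin_two_of] using det_cfM ((List.range (n + 1)).map a)

theorem cfQ_map {S : Type*} [CommRing S] (f : R →+* S) (a : ℕ → R) (n : ℕ) :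
    cfQ (fun i => f (a i)) n = f (cfQ a n) := by
  induction n using Nat.strong_induction_on with
  | _ n ih =>
    match n, ih with
    | 0, _ => simp [cfQ]
    | 1, _ => simp [cfQ]
    | n + 2, ih => simp [cfQ, ih n (by omega), ih (n + 1) (by omega)]

theorem Matrix.mul_self_eq_trace_smul_sub_det_smul (X : Matrix (Fin 2) (Fin 2) R) :
    X * X = X.trace • X - X.det • (1 : Matrix (Fin 2) (Fin 2) R) := by
  ext i j
  fin_cases i <;> fin_cases j <;>
    simp [Matrix.mul_apply, Matrix.trace_fin_two, Matrix.det_fin_two] <;> ring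

def cfBlock (a : ℕ → R) (n k : ℕ) : Matrix (Fin 2) (Fin 2) R :=
  cfM ((List.range k).map fun i => a (n + i))

theorem cfM_range_add (a : ℕ → R) (n k : ℕ) :
    cfM ((List.range (n + k)).map a) = cfM ((List.range n).map a) * cfBlock a n k := by
  rw [List.range_add, List.map_append, List.map_map, cfM_append]
  rfl

theorem det_cfBlock (a : ℕ → R) (n k : ℕ) : (cfBlock a n k).det = (-1) ^ k := by
  simp [cfBlock, det_cfM]

theorem cfBlock_succ_left (a : ℕ → R) (n k : ℕ) :
    cfBlock a n (k + 1) = !![a n, 1; 1, 0] * cfBlock a (n + 1) k := by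
  simp only [cfBlock, List.range_succ_eq_map, List.map_cons, List.map_map]
  rw [← List.singleton_append, cfM_append]
  simp [cfM, Function.comp_def, add_assoc, add_comm 1]

theorem cfBlock_succ_right (a : ℕ → R) (n k : ℕ) :
    cfBlock a n (k + 1) = cfBlock a n k * !![a (n + k), 1; 1, 0] := by
  simp [cfBlock, List.range_succ, cfM]

end Continuants

section Periodic

variable {R : Type*} [CommRing R] {a : ℕ → R} {N k : ℕ}

theorem cfBlock_add_period (hper : ∀ n > N, a (n + k) = a n) {n : ℕ} (hn : N < n) :
    cfBlock a (n + k) k = cfBlock a n k := by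
  unfold cfBlock
  congr 2
  funext i
  rw [add_right_comm, hper _ (by omega)]

theorem trace_cfBlock_succ (hper : ∀ n > N, a (n + k) = a n) (hk : 0 < k) {n : ℕ}
    (hn : N < n) : (cfBlock a (n + 1) k).trace = (cfBlock a n k).trace := by
  obtain ⟨k, rfl⟩ : ∃ k', k = k' + 1 := ⟨k - 1, by omega⟩
  rw [cfBlock_succ_right a (n + 1), cfBlock_succ_left a n, Matrix.trace_mul_comm,
    show n + 1 + k = n + (k + 1) by ring, hper n hn]

theorem trace_cfBlock_eq (hper : ∀ n > N, a (n + k) = a n) (hk : 0 < k) {n : ℕ}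
    (hn : N < n) : (cfBlock a n k).trace = (cfBlock a (N + 1) k).trace := by
  induction n, hn using Nat.le_induction with
  | base => rfl
  | succ n hn ih => rw [trace_cfBlock_succ hper hk (by omega), ih]

theorem cfQ_add_add_period (hper : ∀ n > N, a (n + k) = a n) {n : ℕ} (hn : N < n) :
    cfQ a (n + k + k) = (cfBlock a n k).trace * cfQ a (n + k) - (-1) ^ k * cfQ a n := by
  have hM : cfM ((List.range (n + k + k)).map a) =
      (cfBlock a n k).trace • cfM ((List.range (n + k)).map a) -
        (-1 : R) ^ k • cfM ((List.range n).map a) := by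
    rw [cfM_range_add, cfM_range_add, cfBlock_add_period hper hn, mul_assoc,
      Matrix.mul_self_eq_trace_smul_sub_det_smul, det_cfBlock, Matrix.mul_sub,
      Matrix.mul_smul, Matrix.mul_smul, Matrix.mul_one]
  simpa [cfM_range_apply_one_zero] using congr($hM 1 0)

theorem discr_cfBlock_eq (hper : ∀ n > N, a (n + k) = a n) (hk : 0 < k) {n : ℕ}
    (hn : N < n) : (cfBlock a n k).discr = (cfBlock a (N + 1) k).discr := by
  rw [Matrix.discr_fin_two, Matrix.discr_fin_two, trace_cfBlock_eq hper hk hn, det_cfBlock,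
    det_cfBlock]

end Periodic

theorem isSquare_discr_cfBlock {F : Type*} [Field F] (a : ℕ → F) (n k : ℕ)
    (h₁ : cfQ a (n + 1) = 0) (h₂ : cfQ a (n + 1 + k) = 0) :
    IsSquare (cfBlock a (n + 1) k).discr := by
  have hQ : cfQ a n ≠ 0 := by
    intro h
    simpa [h, h₁] using (cfP_mul_cfQ_sub_cfP_mul_cfQ a n).symm
  have h₁₀ : cfBlock a (n + 1) k 1 0 = 0 := by
    have := congr($(cfM_range_add a (n + 1) k) 1 0)
    simpa [cfM_range_apply_one_zero, cfM_range_succ, Matrix.mul_apply, h₁, h₂, hQ] using this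
  exact ⟨cfBlock a (n + 1) k 0 0 - cfBlock a (n + 1) k 1 1, by
    rw [Matrix.discr_fin_two, Matrix.trace_fin_two, Matrix.det_fin_two, h₁₀]; ring⟩

theorem exists_forall_le_of_le_add {α : Type*} [LinearOrder α] {f : ℕ → α} {n₀ k : ℕ}
    (hk : 0 < k) (hf : ∀ n ≥ n₀, f n ≤ f (n + k)) : ∃ m ≥ n₀, ∀ n ≥ n₀, f m ≤ f n := by
  obtain ⟨m, hm, hmin⟩ :=
    (Finset.Ico n₀ (n₀ + k)).exists_min_image f (Finset.nonempty_Ico.2 (by omega))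
  refine ⟨m, (Finset.mem_Ico.1 hm).1, fun n hn => ?_⟩
  induction n using Nat.strong_induction_on with
  | _ n ih =>
    by_cases hlt : n < n₀ + k
    · exact hmin n (Finset.mem_Ico.2 ⟨hn, hlt⟩)
    · obtain ⟨n, rfl⟩ : ∃ n', n = n' + k := ⟨n - k, by omega⟩
      exact (ih n (by omega) (by omega)).trans (hf n (by omega))

theorem exists_forall_ge_of_add_le {α : Type*} [LinearOrder α] {f : ℕ → α} {n₀ k : ℕ}
    (hk : 0 < k) (hf : ∀ n ≥ n₀, f (n + k) ≤ f n) : ∃ m ≥ n₀, ∀ n ≥ n₀, f n ≤ f m :=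
  exists_forall_le_of_le_add (α := αᵒᵈ) hk hf

theorem exists_roots_abs_lt_one_lt_abs {t d : ℝ} (hd : |d| = 1) (hΔ : 0 < t ^ 2 - 4 * d)
    (ht : t ≠ 0) : ∃ l m : ℝ, l + m = t ∧ l * m = d ∧ 1 < |l| ∧ |m| ≤ 1 := by
  have dominant : ∀ l m : ℝ, l * m = d → |m| < |l| → 1 < |l| ∧ |m| ≤ 1 := by
    intro l m hlm hml
    have : |l| * |m| = 1 := by rw [← abs_mul, hlm, hd]
    constructor <;> nlinarith [abs_nonneg m]
  set s := √(t ^ 2 - 4 * d)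
  have hs : s ^ 2 = t ^ 2 - 4 * d := Real.sq_sqrt hΔ.le
  have hs₀ : 0 < s := Real.sqrt_pos.2 hΔ
  have hprod : (t + s) / 2 * ((t - s) / 2) = d := by linear_combination (-1 / 4 : ℝ) * hs
  have hne : |(t + s) / 2| ≠ |(t - s) / 2| := by
    rw [Ne, abs_eq_abs]
    rintro (h | h) <;> [linarith; exact ht (by linarith)]
  rcases hne.lt_or_gt with h | h
  · exact ⟨_, _, by ring, by rw [mul_comm, hprod], dominant _ _ (by rw [mul_comm, hprod]) h⟩
  · exact ⟨_, _, by ring, hprod, dominant _ _ hprod h⟩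

theorem exists_pow_le_abs_of_rec {q : ℕ → ℝ} {n₀ k : ℕ} (hk : 0 < k) {l m : ℝ}
    (hl : 1 < |l|) (hm : |m| ≤ 1)
    (hrec : ∀ n ≥ n₀, q (n + k + k) = (l + m) * q (n + k) - l * m * q n)
    (hw : ∀ n ≥ n₀, q (n + k) ≠ m * q n) :
    ∃ A > 0, ∃ θ > 1, ∀ᶠ n in atTop, A * θ ^ n ≤ |q n| := by
  -- each step of `k` multiplies `w` by `l` and `z` by `m`, and `(l - m) q = w - z`
  set w := fun n => q (n + k) - m * q n
  set z := fun n => q (n + k) - l * q n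
  set θ := |l| ^ ((k : ℝ)⁻¹)
  have hθk : θ ^ k = |l| := Real.rpow_inv_natCast_pow (abs_nonneg l) hk.ne'
  have hθ : 1 < θ := by
    by_contra! h
    linarith [pow_le_one₀ (by positivity) h (n := k)]
  obtain ⟨n₁, hn₁, hw_min⟩ := exists_forall_le_of_le_add hk (n₀ := n₀)
    (f := fun n => |w n| / θ ^ n) fun n hn => by
      have : w (n + k) = l * w n := by simp only [w, hrec n hn]; ring
      rw [this, abs_mul, pow_add, hθk, mul_comm |l|, mul_div_mul_right _ _ (by positivity)]
  obtain ⟨n₂, -, hz_max⟩ := exists_forall_ge_of_add_le hk (n₀ := n₀)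
    (f := fun n => |z n|) fun n hn => by
      have : z (n + k) = m * z n := by simp only [z, hrec n hn]; ring
      rw [this, abs_mul]
      exact mul_le_of_le_one_left (abs_nonneg _) hm
  set c := |w n₁| / θ ^ n₁
  have hc : 0 < c := div_pos (abs_pos.2 (sub_ne_zero.2 (hw n₁ hn₁))) (by positivity)
  have hlm : 0 < |l - m| := abs_pos.2 (sub_ne_zero.2 fun h => by rw [h] at hl; linarith)
  refine ⟨c / (2 * |l - m|), by positivity, θ, hθ, ?_⟩
  filter_upwards [eventually_ge_atTop n₀,
    (tendsto_pow_atTop_atTop_of_one_lt hθ).eventually_ge_atTop (2 * |z n₂| / c)] with n hn hθn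
  have hwn : c * θ ^ n ≤ |w n| := (le_div_iff₀ (by positivity)).1 (hw_min n hn)
  have hzn : 2 * |z n| ≤ c * θ ^ n := by
    rw [div_le_iff₀ hc] at hθn
    linarith [hz_max n hn]
  rw [div_mul_eq_mul_div, div_le_iff₀ (by positivity)]
  calc c * θ ^ n ≤ 2 * (|w n| - |z n|) := by linarith
    _ ≤ 2 * |w n - z n| := by gcongr; exact abs_sub_abs_le_abs_sub _ _
    _ = |q n| * (2 * |l - m|) := by
      rw [show w n - z n = (l - m) * q n by simp only [w, z]; ring, abs_mul]; ring

theorem exists_abs_le_of_rec {q : ℕ → ℝ} {n₀ k : ℕ} (hk : 0 < k) {t : ℝ} (ht : |t| < 2)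
    (hrec : ∀ n ≥ n₀, q (n + k + k) = t * q (n + k) - q n) :
    ∃ C, ∀ᶠ n in atTop, |q n| ≤ C := by
  -- the positive definite form `x² - t x y + y²` is invariant under `(x, y) ↦ (y, t y - x)`
  set I := fun n => q n ^ 2 - t * q n * q (n + k) + q (n + k) ^ 2
  obtain ⟨n₁, -, hI⟩ := exists_forall_ge_of_add_le hk (n₀ := n₀) (f := I) fun n hn =>
    le_of_eq (by simp only [I, hrec n hn]; ring)
  refine ⟨√(2 * I n₁ / (2 - |t|)), ?_⟩
  filter_upwards [eventually_ge_atTop n₀] with n hn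
  apply Real.abs_le_sqrt
  rw [le_div_iff₀ (by linarith)]
  have hcross : t * q n * q (n + k) ≤ |t| * ((q n ^ 2 + q (n + k) ^ 2) / 2) := by
    calc t * q n * q (n + k) ≤ |t * (q n * q (n + k))| := by rw [← mul_assoc]; exact le_abs_self _
      _ = |t| * |q n * q (n + k)| := abs_mul _ _
      _ ≤ |t| * ((q n ^ 2 + q (n + k) ^ 2) / 2) := by
        gcongr
        rw [abs_mul]
        nlinarith [sq_nonneg (|q n| - |q (n + k)|), sq_abs (q n), sq_abs (q (n + k))]
  nlinarith [hI n hn, abs_nonneg t, sq_nonneg (q (n + k))]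

theorem abs_convergent_succ_sub {b : ℕ → ℝ} {n : ℕ} (h₁ : cfQ b (n + 1) ≠ 0)
    (h₂ : cfQ b (n + 2) ≠ 0) :
    |cfP b (n + 2) / cfQ b (n + 2) - cfP b (n + 1) / cfQ b (n + 1)| =
      (|cfQ b (n + 1)| * |cfQ b (n + 2)|)⁻¹ := by
  rw [div_sub_div _ _ h₂ h₁, mul_comm (cfQ b (n + 2)), cfP_mul_cfQ_sub_cfP_mul_cfQ b (n + 1),
    abs_div, abs_mul]
  simp [mul_comm]

theorem cfConvergesTo_of_pow_le_abs {b : ℕ → ℝ} {A θ : ℝ} (hA : 0 < A) (hθ : 1 < θ)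
    (h : ∀ᶠ n in atTop, A * θ ^ n ≤ |cfQ b n|) : ∃ ξ, CFConvergesTo b ξ := by
  have hQ : ∀ᶠ n in atTop, cfQ b n ≠ 0 := h.mono fun n hn h₀ => by
    rw [h₀, abs_zero] at hn
    exact (by positivity : 0 < A * θ ^ n).not_ge hn
  set x := fun n => cfP b (n + 1) / cfQ b (n + 1)
  have hdist : ∀ᶠ n in atTop, ‖dist (x n) (x (n + 1))‖ ≤ (A ^ 2)⁻¹ * θ⁻¹ ^ n := by
    filter_upwards [(tendsto_add_atTop_nat 1).eventually h, (tendsto_add_atTop_nat 2).eventually h,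
      (tendsto_add_atTop_nat 1).eventually hQ, (tendsto_add_atTop_nat 2).eventually hQ]
      with n h₁ h₂ hQ₁ hQ₂
    rw [Real.norm_eq_abs, abs_dist, dist_comm, Real.dist_eq, abs_convergent_succ_sub hQ₁ hQ₂,
      inv_pow, ← mul_inv]
    refine inv_anti₀ (by positivity) ?_
    calc A ^ 2 * θ ^ n ≤ A ^ 2 * θ ^ (n + 1 + (n + 2)) := by
          gcongr
          · exact hθ.le
          · omega
      _ = (A * θ ^ (n + 1)) * (A * θ ^ (n + 2)) := by ring
      _ ≤ |cfQ b (n + 1)| * |cfQ b (n + 2)| := mul_le_mul h₁ h₂ (by positivity) (abs_nonneg _)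
  have hgeom : Summable fun n : ℕ => (A ^ 2)⁻¹ * θ⁻¹ ^ n :=
    (summable_geometric_of_lt_one (by positivity) (inv_lt_one_of_one_lt₀ hθ)).mul_left _
  obtain ⟨ξ, hξ⟩ := cauchySeq_tendsto_of_complete
    (cauchySeq_of_summable_dist (Summable.of_norm_bounded_eventually_nat hgeom hdist))
  obtain ⟨N₀, hN₀⟩ := eventually_atTop.1 hQ
  exact ⟨ξ, ⟨N₀, fun n hn => hN₀ _ (by omega)⟩, hξ⟩

theorem not_cfConvergesTo_of_abs_le {b : ℕ → ℝ} {C : ℝ} (h : ∀ᶠ n in atTop, |cfQ b n| ≤ C) :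
    ¬∃ ξ, CFConvergesTo b ξ := by
  rintro ⟨ξ, ⟨N₀, hQ⟩, hξ⟩
  have hQ' : ∀ᶠ n in atTop, cfQ b (n + 1) ≠ 0 := eventually_atTop.2 ⟨N₀, hQ⟩
  obtain ⟨n₀, hn₀, hQn₀⟩ := ((tendsto_add_atTop_nat 1).eventually h).and hQ' |>.exists
  have hC : 0 < C := (abs_pos.2 hQn₀).trans_le hn₀
  have hgap : Tendsto (fun n => |cfP b (n + 2) / cfQ b (n + 2) - cfP b (n + 1) / cfQ b (n + 1)|)
      atTop (𝓝 0) := by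
    simpa using ((hξ.comp (tendsto_add_atTop_nat 1)).sub hξ).abs
  obtain ⟨n, hsmall, h₁, h₂, hQ₁, hQ₂⟩ := (hgap.eventually_lt_const (by positivity : 0 < (C * C)⁻¹)
    |>.and <| ((tendsto_add_atTop_nat 1).eventually h).and <|
      ((tendsto_add_atTop_nat 2).eventually h).and <| hQ'.and <|
        (tendsto_add_atTop_nat 1).eventually hQ').exists
  rw [abs_convergent_succ_sub hQ₁ hQ₂] at hsmall
  exact hsmall.not_ge (inv_anti₀ (by positivity) (mul_le_mul h₁ h₂ (abs_nonneg _) hC.le))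

section Subfield

variable {K : Subfield ℝ} {a : ℕ → K} {N k : ℕ}

theorem coe_cfQ (a : ℕ → K) (n : ℕ) : cfQ (fun i => (a i : ℝ)) n = cfQ a n :=
  cfQ_map K.subtype a n

theorem coe_discr_cfBlock (a : ℕ → K) (n k : ℕ) :
    ((cfBlock a n k).discr : ℝ) = ((cfBlock a n k).trace : ℝ) ^ 2 - 4 * (-1) ^ k := by
  rw [Matrix.discr_fin_two, det_cfBlock]
  norm_cast

theorem coe_cfQ_add_add_period (hper : ∀ n > N, a (n + k) = a n) (hk : 0 < k) :
    ∀ n ≥ N + 1, cfQ (fun i => (a i : ℝ)) (n + k + k) =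
      ((cfBlock a (N + 1) k).trace : ℝ) * cfQ (fun i => (a i : ℝ)) (n + k) -
        (-1) ^ k * cfQ (fun i => (a i : ℝ)) n := by
  intro n hn
  rw [coe_cfQ, coe_cfQ, coe_cfQ, cfQ_add_add_period hper hn, trace_cfBlock_eq hper hk hn]
  push_cast
  ring

theorem coe_cfQ_add_ne_mul (a : ℕ → K) {n k : ℕ} (hsq : ¬IsSquare (cfBlock a (n + 1) k).discr)
    {m : ℝ} (hm : ∀ y : K, (y : ℝ) ≠ m) :
    cfQ (fun i => (a i : ℝ)) (n + 1 + k) ≠ m * cfQ (fun i => (a i : ℝ)) (n + 1) := by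
  rw [coe_cfQ, coe_cfQ]
  intro h
  by_cases h₀ : cfQ a (n + 1) = 0
  · have : ((cfQ a (n + 1 + k) : K) : ℝ) = 0 := by simp [h, h₀]
    exact hsq (isSquare_discr_cfBlock a n k h₀ (by exact_mod_cast this))
  · refine hm (cfQ a (n + 1 + k) / cfQ a (n + 1)) ?_
    have : ((cfQ a (n + 1) : K) : ℝ) ≠ 0 := by exact_mod_cast h₀
    push_cast
    rw [h, mul_div_cancel_right₀ _ this]

theorem exists_cfConvergesTo_of_not_isSquare (hper : ∀ n > N, a (n + k) = a n) (hk : 0 < k)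
    (hpos : 0 < ((cfBlock a (N + 1) k).discr : ℝ))
    (hsq : ¬IsSquare (cfBlock a (N + 1) k).discr) :
    ∃ ξ, CFConvergesTo (fun n => (a n : ℝ)) ξ := by
  set W := cfBlock a (N + 1) k
  set t : ℝ := (W.trace : ℝ)
  have hΔ : (W.discr : ℝ) = t ^ 2 - 4 * (-1) ^ k := coe_discr_cfBlock a (N + 1) k
  have ht : t ≠ 0 := by
    intro ht₀
    have htK : W.trace = 0 := by exact_mod_cast (show (W.trace : ℝ) = 0 from ht₀)
    rcases neg_one_pow_eq_or K k with h | h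
    · rw [Matrix.discr_fin_two, det_cfBlock, htK, h] at hpos
      norm_cast at hpos
    · exact hsq ⟨2, by rw [Matrix.discr_fin_two, det_cfBlock, htK, h]; norm_num⟩
  obtain ⟨l, m, hsum, hprod, hl, hm⟩ :=
    exists_roots_abs_lt_one_lt_abs (d := (-1) ^ k) (by simp) (hΔ ▸ hpos) ht
  have hmK : ∀ y : K, (y : ℝ) ≠ m := by
    intro y hy
    refine hsq ⟨2 * y - W.trace, Subtype.ext ?_⟩
    have : (W.discr : ℝ) = (2 * m - t) * (2 * m - t) := by
      rw [hΔ, ← hsum, ← hprod]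
      ring
    rw [← hy] at this
    push_cast
    exact this
  have hw : ∀ n ≥ N + 1, cfQ (fun i => (a i : ℝ)) (n + k) ≠ m * cfQ (fun i => (a i : ℝ)) n := by
    intro n hn
    obtain ⟨n, rfl⟩ : ∃ n', n = n' + 1 := ⟨n - 1, by omega⟩
    refine coe_cfQ_add_ne_mul a ?_ hmK
    rwa [discr_cfBlock_eq hper hk (by omega)]
  obtain ⟨A, hA, θ, hθ, hgrowth⟩ := exists_pow_le_abs_of_rec hk hl hm
    (by simpa only [hsum, hprod] using coe_cfQ_add_add_period hper hk) hw
  exact cfConvergesTo_of_pow_le_abs hA hθ hgrowth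

theorem not_exists_cfConvergesTo_of_discr_neg (hper : ∀ n > N, a (n + k) = a n) (hk : 0 < k)
    (hneg : ((cfBlock a (N + 1) k).discr : ℝ) < 0) :
    ¬∃ ξ, CFConvergesTo (fun n => (a n : ℝ)) ξ := by
  set t : ℝ := ((cfBlock a (N + 1) k).trace : ℝ)
  rw [coe_discr_cfBlock] at hneg
  have hk_even : (-1 : ℝ) ^ k = 1 := by
    rcases neg_one_pow_eq_or ℝ k with h | h
    · exact h
    · nlinarith [sq_nonneg t]
  have ht : |t| < 2 := abs_lt_of_sq_lt_sq (by linarith) zero_le_two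
  obtain ⟨C, hC⟩ := exists_abs_le_of_rec hk ht
    (by simpa only [hk_even, one_mul] using coe_cfQ_add_add_period hper hk)
  exact not_cfConvergesTo_of_abs_le hC

end Subfield

theorem ultimately_periodic_cf_convergence_general
    (K : Subfield ℝ)
    (a : ℕ → K)
    (N k : ℕ) (hk : 1 ≤ k) (hper : ∀ n > N, a (n + k) = a n)
    (E : Matrix (Fin 2) (Fin 2) K)
    (hE : E = cfM ((List.range (N + 1)).map a) *
        cfM ((List.range k).map (fun i => a (N + 1 + i))) *
        (cfM ((List.range (N + 1)).map a))⁻¹)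
    (Δ : K) (hΔ : Δ = (E 1 1 - E 0 0) ^ 2 + 4 * E 0 1 * E 1 0) :
    (0 < (Δ : ℝ) → ¬(∃ y : K, y ^ 2 = Δ) →
      ∃ ξ : ℝ, CFConvergesTo (fun n => (a n : ℝ)) ξ) ∧
    ((Δ : ℝ) < 0 → ¬∃ ξ : ℝ, CFConvergesTo (fun n => (a n : ℝ)) ξ) := by
  have hunit : IsUnit (cfM ((List.range (N + 1)).map a)) := by
    rw [Matrix.isUnit_iff_isUnit_det, det_cfM]
    exact isUnit_neg_one.pow _
  have hΔW : Δ = (cfBlock a (N + 1) k).discr := by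
    have hΔE : Δ = E.discr := by
      rw [hΔ, Matrix.discr_fin_two, Matrix.trace_fin_two, Matrix.det_fin_two]
      ring
    have hconj := Matrix.discr_conj hunit.unit (cfBlock a (N + 1) k)
    simp only [IsUnit.unit_spec] at hconj
    rw [hΔE, hE]
    exact hconj
  subst hΔW
  refine ⟨fun hpos hnsq => exists_cfConvergesTo_of_not_isSquare hper hk hpos ?_,
    not_exists_cfConvergesTo_of_discr_neg hper hk⟩
  rintro ⟨y, hy⟩
  exact hnsq ⟨y, by rw [hy, sq]⟩

/-- convergence criterion for an ultimately periodic continued fraction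
with partial quotients in the ring of integers of a real quadratic field `K ⊆ ℝ`. -/
theorem ultimately_periodic_cf_convergence
    (K : Subfield ℝ) (hK : Module.finrank ℚ K = 2)
    (a : ℕ → K) (ha : ∀ n, IsIntegral ℤ (a n))
    (N k : ℕ) (hk : 1 ≤ k) (hper : ∀ n > N, a (n + k) = a n)
    (E : Matrix (Fin 2) (Fin 2) K)
    (hE : E = cfM ((List.range (N + 1)).map a) *
        cfM ((List.range k).map (fun i => a (N + 1 + i))) *
        (cfM ((List.range (N + 1)).map a))⁻¹)
    (Δ : K) (hΔ : Δ = (E 1 1 - E 0 0) ^ 2 + 4 * E 0 1 * E 1 0) :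
    (0 < (Δ : ℝ) → ¬(∃ y : K, y ^ 2 = Δ) →
      ∃ ξ : ℝ, CFConvergesTo (fun n => (a n : ℝ)) ξ) ∧
    ((Δ : ℝ) < 0 → ¬∃ ξ : ℝ, CFConvergesTo (fun n => (a n : ℝ)) ξ) :=
  ultimately_periodic_cf_convergence_general K a N k hk hper E hE Δ hΔ
end

section
/- Suppose a sequence (a_n)_{n≥0} in O_K gives a continued fraction converging to ξ, and suppose σ(B²−4AC) < 0. If (a_n) is ultimately periodic, then the sequences (|σ(P_n)|)_{n≥0} and (|σ(Q_n)|)_{n≥0} are bounded. -/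
/-!
Write `W n = [[P n, P (n-1)], [Q n, Q (n-1)]]` (`contMat a n` below), so that
`W (n+1) = W n * [[a (n+1), 1], [1, 0]]` and `det W n = ±1`. Once `a` is periodic with period
`k`, `W (n+k) = T * W n` for a fixed `T` over `K` with `det T = ±1`. Since `P n / Q n → ξ`, the
Möbius transformation of `T` fixes `ξ`. As `ξ ∉ K`, `T` is not scalar (otherwise the convergents
would be eventually periodic and `ξ` would be one of them), so its fixed-point polynomial is a
nonzero `K`-multiple of `A X² + B X + C`, whence `tr T² - 4 det T = c² (B² - 4AC)` with `c ≠ 0`.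
Hence `U = σ(T)` has negative discriminant, which forces `det U = 1` and `tr U² < 4`. By
Cayley–Hamilton every entry `x` of `σ(W n)` satisfies `x (n+2k) = tr U · x (n+k) - x n`, and
along each residue class modulo `k` this recurrence preserves the positive definite form
`x₁² - tr U · x₁ x₀ + x₀²`, so the entries stay bounded.
-/

open Filter Topology

section Continuants

variable {R : Type*} [CommRing R]

def contMat (a : ℕ → R) (n : ℕ) : Matrix (Fin 2) (Fin 2) R :=
  !![cfP a (n + 1), cfP a n; cfQ a (n + 1), cfQ a n]

theorem contMat_succ (a : ℕ → R) (n : ℕ) :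
    contMat a (n + 1) = contMat a n * !![a (n + 1), 1; 1, 0] := by
  ext i j
  fin_cases i <;> fin_cases j <;> simp [contMat, cfP, cfQ, Matrix.mul_apply] <;> ring

theorem det_contMat (a : ℕ → R) (n : ℕ) : (contMat a n).det = (-1) ^ (n + 1) := by
  induction n with
  | zero => simp [contMat, cfP, cfQ, Matrix.det_fin_two_of]
  | succ n ih => rw [contMat_succ, Matrix.det_mul, ih, Matrix.det_fin_two_of]; ring

theorem map_cfP {S : Type*} [CommRing S] (f : R →+* S) (a : ℕ → R) :
    ∀ n, f (cfP a n) = cfP (fun i => f (a i)) n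
  | 0 => by simp [cfP]
  | 1 => by simp [cfP]
  | n + 2 => by simp only [cfP, map_add, map_mul, map_cfP f a n, map_cfP f a (n + 1)]

theorem map_cfQ {S : Type*} [CommRing S] (f : R →+* S) (a : ℕ → R) :
    ∀ n, f (cfQ a n) = cfQ (fun i => f (a i)) n
  | 0 => by simp [cfQ]
  | 1 => by simp [cfQ]
  | n + 2 => by simp only [cfQ, map_add, map_mul, map_cfQ f a n, map_cfQ f a (n + 1)]

theorem exists_contMat_add_eq_mul {a : ℕ → R} {N k : ℕ} (hper : ∀ n > N, a (n + k) = a n) :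
    ∃ T : Matrix (Fin 2) (Fin 2) R, T.det = (-1) ^ k ∧
      ∀ n ≥ N, contMat a (n + k) = T * contMat a n := by
  have hunit : IsUnit ((-1 : R) ^ (N + 1)) := isUnit_neg_one.pow _
  refine ⟨contMat a (N + k) * (contMat a N)⁻¹, ?_, fun n hn => ?_⟩
  · refine hunit.mul_left_inj.mp ?_
    rw [← det_contMat a N, ← Matrix.det_mul, Matrix.nonsing_inv_mul_cancel_right _ _
      (det_contMat a N ▸ hunit), det_contMat, det_contMat]
    ring
  · induction n, hn using Nat.le_induction with
    | base => rw [Matrix.nonsing_inv_mul_cancel_right _ _ (det_contMat a N ▸ hunit)]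
    | succ n hn ih =>
      rw [add_right_comm, contMat_succ, ih, contMat_succ, Matrix.mul_assoc, add_right_comm,
        hper (n + 1) (by omega)]

theorem Matrix.mul_self_fin_two (U : Matrix (Fin 2) (Fin 2) R) :
    U * U = U.trace • U - U.det • (1 : Matrix (Fin 2) (Fin 2) R) := by
  ext i j
  fin_cases i <;> fin_cases j <;>
    simp [Matrix.mul_apply, Matrix.trace_fin_two, Matrix.det_fin_two] <;> ring

theorem add_two_mul_eq_trace_smul_sub {U : Matrix (Fin 2) (Fin 2) R} (hU : U.det = 1)
    {V : ℕ → Matrix (Fin 2) (Fin 2) R} {N k : ℕ} (hV : ∀ n ≥ N, V (n + k) = U * V n)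
    (n : ℕ) (hn : N ≤ n) : V (n + 2 * k) = U.trace • V (n + k) - V n := by
  rw [two_mul, ← add_assoc, hV _ (by omega), hV n hn, ← Matrix.mul_assoc, Matrix.mul_self_fin_two,
    hU, one_smul, Matrix.sub_mul, Matrix.smul_mul, Matrix.one_mul]

end Continuants

theorem cfConvergesTo_map_iff {K : Type*} [Field K] (f : K →+* ℝ) (a : ℕ → K) (ξ : ℝ) :
    CFConvergesTo (fun n => f (a n)) ξ ↔ (∃ N, ∀ n ≥ N, cfQ a (n + 1) ≠ 0) ∧
      Tendsto (fun n => f (cfP a (n + 1)) / f (cfQ a (n + 1))) atTop (𝓝 ξ) := by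
  simp only [CFConvergesTo, ← map_cfP, ← map_cfQ, ne_eq, map_eq_zero]

theorem sq_le_of_chebyshev_recurrence {t : ℝ} {y : ℕ → ℝ}
    (hy : ∀ m, y (m + 2) = t * y (m + 1) - y m) (m : ℕ) :
    (4 - t ^ 2) * y m ^ 2 ≤ 4 * (y 1 ^ 2 - t * y 1 * y 0 + y 0 ^ 2) := by
  have hinv : ∀ m, y (m + 1) ^ 2 - t * y (m + 1) * y m + y m ^ 2
      = y 1 ^ 2 - t * y 1 * y 0 + y 0 ^ 2 := by
    intro m
    induction m with
    | zero => rfl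
    | succ m ih => rw [← ih, hy]; ring
  nlinarith [hinv m, sq_nonneg (2 * y (m + 1) - t * y m)]

theorem exists_abs_le_of_forall_abs_add_mul_le {x g : ℕ → ℝ} {N k : ℕ} (hk : 0 < k)
    (hg : ∀ n ≥ N, ∀ m, |x (n + k * m)| ≤ g n) : ∃ M, ∀ n, |x n| ≤ M := by
  have hsum : ∀ i < N + k, |x i| + |g i| ≤ ∑ j ∈ Finset.range (N + k), (|x j| + |g j|) :=
    fun i hi => Finset.single_le_sum (f := fun j => |x j| + |g j|) (fun j _ => by positivity)
      (Finset.mem_range.2 hi)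
  refine ⟨∑ j ∈ Finset.range (N + k), (|x j| + |g j|), fun n => ?_⟩
  by_cases hn : n < N
  · exact (le_add_of_nonneg_right (abs_nonneg _)).trans (hsum n (by omega))
  · have hdecomp : n = N + (n - N) % k + k * ((n - N) / k) := by
      have := Nat.mod_add_div (n - N) k
      omega
    calc |x n| = |x (N + (n - N) % k + k * ((n - N) / k))| := by rw [← hdecomp]
      _ ≤ g (N + (n - N) % k) := hg _ (by omega) _
      _ ≤ |x (N + (n - N) % k)| + |g (N + (n - N) % k)| :=
        (le_abs_self _).trans (le_add_of_nonneg_left (abs_nonneg _))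
      _ ≤ _ := hsum _ (by have := Nat.mod_lt (n - N) hk; omega)

theorem exists_abs_le_of_chebyshev_step {t : ℝ} (ht : t ^ 2 < 4) {x : ℕ → ℝ} {N k : ℕ}
    (hk : 0 < k) (hx : ∀ n ≥ N, x (n + 2 * k) = t * x (n + k) - x n) : ∃ M, ∀ n, |x n| ≤ M := by
  refine exists_abs_le_of_forall_abs_add_mul_le (N := N) hk (g := fun n =>
    √(4 * (x (n + k) ^ 2 - t * x (n + k) * x n + x n ^ 2) / (4 - t ^ 2))) fun n hn m => ?_
  have hrec : ∀ m, x (n + k * (m + 2)) = t * x (n + k * (m + 1)) - x (n + k * m) := fun m => by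
    rw [show n + k * (m + 2) = n + k * m + 2 * k by ring,
      show n + k * (m + 1) = n + k * m + k by ring]
    exact hx _ (by omega)
  have h := sq_le_of_chebyshev_recurrence (y := fun m => x (n + k * m)) hrec m
  simp only [mul_zero, add_zero, mul_one] at h
  exact Real.abs_le_sqrt ((le_div_iff₀ (by linarith)).2 (by linarith))

theorem det_eq_one_and_trace_sq_lt_four {U : Matrix (Fin 2) (Fin 2) ℝ} {k : ℕ}
    (hdet : U.det = (-1) ^ k) (h : U.trace ^ 2 - 4 * U.det < 0) :
    U.det = 1 ∧ U.trace ^ 2 < 4 := by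
  rcases neg_one_pow_eq_or ℝ k with h1 | h1 <;> rw [h1] at hdet <;> rw [hdet] at h ⊢
  · exact ⟨rfl, by linarith⟩
  · nlinarith [sq_nonneg U.trace]

theorem quadratic_eq_zero_of_tendsto_ratio {W : ℕ → Matrix (Fin 2) (Fin 2) ℝ}
    {T : Matrix (Fin 2) (Fin 2) ℝ} {N k : ℕ} {ξ : ℝ} (hW : ∀ n ≥ N, W (n + k) = T * W n)
    (hQ : ∀ n ≥ N, W n 1 0 ≠ 0) (hlim : Tendsto (fun n => W n 0 0 / W n 1 0) atTop (𝓝 ξ)) :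
    T 1 0 * ξ ^ 2 + (T 1 1 - T 0 0) * ξ - T 0 1 = 0 := by
  set x := fun n => W n 0 0 / W n 1 0
  have hmobius : ∀ n ≥ N, x (n + k) * (T 1 0 * x n + T 1 1) = T 0 0 * x n + T 0 1 := by
    intro n hn
    have hP : W (n + k) 0 0 = T 0 0 * W n 0 0 + T 0 1 * W n 1 0 := by
      simp [hW n hn, Matrix.mul_apply, Fin.sum_univ_two]
    have hQ' : W (n + k) 1 0 = T 1 0 * W n 0 0 + T 1 1 * W n 1 0 := by
      simp [hW n hn, Matrix.mul_apply, Fin.sum_univ_two]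
    simp only [x]
    have hden : T 1 0 * (W n 0 0 / W n 1 0) + T 1 1 = W (n + k) 1 0 / W n 1 0 := by
      rw [hQ']; field_simp [hQ n hn]
    rw [hden, div_mul_div_cancel₀ (hQ (n + k) (by omega)), hP]
    field_simp [hQ n hn]
  have hleft : Tendsto (fun n => x (n + k) * (T 1 0 * x n + T 1 1)) atTop
      (𝓝 (ξ * (T 1 0 * ξ + T 1 1))) :=
    (hlim.comp (tendsto_add_atTop_nat k)).mul ((hlim.const_mul _).add_const _)
  have hright : Tendsto (fun n => x (n + k) * (T 1 0 * x n + T 1 1)) atTop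
      (𝓝 (T 0 0 * ξ + T 0 1)) :=
    ((hlim.const_mul _).add_const _).congr' <|
      (eventually_ge_atTop N).mono fun n hn => (hmobius n hn).symm
  linear_combination tendsto_nhds_unique hleft hright

theorem ratio_eq_of_tendsto_of_smul {W : ℕ → Matrix (Fin 2) (Fin 2) ℝ} {c ξ : ℝ} {N k : ℕ}
    (hk : 0 < k) (hc : c ≠ 0) (hW : ∀ n ≥ N, W (n + k) = c • W n)
    (hlim : Tendsto (fun n => W n 0 0 / W n 1 0) atTop (𝓝 ξ)) : W N 0 0 / W N 1 0 = ξ := by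
  have hpow : ∀ m, W (N + k * m) = c ^ m • W N := by
    intro m
    induction m with
    | zero => simp
    | succ m ih => rw [mul_add_one, ← add_assoc, hW _ (by omega), ih, smul_smul, pow_succ']
  have hconst : ∀ m, W (N + k * m) 0 0 / W (N + k * m) 1 0 = W N 0 0 / W N 1 0 := by
    intro m
    simp only [hpow, Matrix.smul_apply, smul_eq_mul]
    exact mul_div_mul_left _ _ (pow_ne_zero m hc)
  have hsub : Tendsto (fun m => N + k * m) atTop atTop :=
    tendsto_atTop_mono (fun m => le_add_left (Nat.le_mul_of_pos_left m hk)) tendsto_id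
  exact tendsto_nhds_unique tendsto_const_nhds ((hlim.comp hsub).congr hconst)

theorem Subfield.subtype_ne_of_finrank_lt_natDegree_minpoly {L : Type*} [Field L] [CharZero L]
    {K : Subfield L} [FiniteDimensional ℚ K] {ξ : L}
    (h : Module.finrank ℚ K < (minpoly ℚ ξ).natDegree) (y : K) : K.subtype y ≠ ξ := by
  rintro rfl
  rw [show K.subtype y = K.subtype.toRatAlgHom y from rfl,
    minpoly.algHom_eq _ K.subtype.injective] at h
  exact h.not_ge (minpoly.natDegree_le y)

section Quadratic

variable {K L : Type*} [Field K] [Field L] (f : K →+* L) {ξ : L}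

theorem eq_zero_of_linear_eq_zero (hξ : ∀ y, f y ≠ ξ) {b c : K} (h : f b * ξ + f c = 0) :
    b = 0 ∧ c = 0 := by
  have hb : b = 0 := by
    by_contra hb
    apply hξ (-c / b)
    rw [map_div₀, map_neg, div_eq_iff (by simpa using hb)]
    linear_combination -h
  subst hb
  simpa using h

theorem mul_eq_mul_of_quadratic_eq_zero (hξ : ∀ y, f y ≠ ξ) {A B C a b c : K}
    (h : f A * ξ ^ 2 + f B * ξ + f C = 0) (h' : f a * ξ ^ 2 + f b * ξ + f c = 0) :
    a * B = A * b ∧ a * C = A * c := by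
  have hlin := eq_zero_of_linear_eq_zero f hξ (b := A * b - a * B) (c := A * c - a * C) (by
    simp only [map_sub, map_mul]
    linear_combination f A * h' - f a * h)
  exact ⟨by linear_combination -hlin.1, by linear_combination -hlin.2⟩

end Quadratic

theorem exists_trace_sq_sub_four_det_eq {K : Type*} [Field K] (f : K →+* ℝ) {ξ : ℝ}
    (hξ : ∀ y, f y ≠ ξ) {A B C : K} (hA : A ≠ 0) (heq : f A * ξ ^ 2 + f B * ξ + f C = 0)
    {T : Matrix (Fin 2) (Fin 2) K} (hT : T.det ≠ 0) {W : ℕ → Matrix (Fin 2) (Fin 2) K}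
    {N k : ℕ} (hk : 0 < k) (hW : ∀ n ≥ N, W (n + k) = T * W n) (hQ : ∀ n ≥ N, W n 1 0 ≠ 0)
    (hlim : Tendsto (fun n => f (W n 0 0) / f (W n 1 0)) atTop (𝓝 ξ)) :
    ∃ c ≠ 0, T.trace ^ 2 - 4 * T.det = c ^ 2 * (B ^ 2 - 4 * A * C) := by
  have hWf : ∀ n ≥ N, f.mapMatrix (W (n + k)) = f.mapMatrix T * f.mapMatrix (W n) :=
    fun n hn => by rw [hW n hn, map_mul]
  have hfix := quadratic_eq_zero_of_tendsto_ratio (W := fun n => f.mapMatrix (W n)) hWf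
    (fun n hn => by simpa using hQ n hn) hlim
  obtain ⟨h₁, h₂⟩ := mul_eq_mul_of_quadratic_eq_zero f hξ heq
    (a := T 1 0) (b := T 1 1 - T 0 0) (c := -T 0 1) (by simpa [sub_eq_add_neg] using hfix)
  by_cases h10 : T 1 0 = 0
  · exfalso
    have h11 : T 1 1 = T 0 0 := by
      simpa [h10, hA, sub_eq_zero] using h₁.symm
    have h01 : T 0 1 = 0 := by simpa [h10, hA] using h₂
    have hscalar : T = T 0 0 • 1 := by
      ext i j; fin_cases i <;> fin_cases j <;> simp [h10, h11, h01]
    have hT00 : T 0 0 ≠ 0 := fun h => hT (by simp [Matrix.det_fin_two, h, h01])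
    apply hξ (W N 0 0 / W N 1 0)
    rw [map_div₀]
    refine ratio_eq_of_tendsto_of_smul (W := fun n => f.mapMatrix (W n)) (c := f (T 0 0)) hk
      (by simpa using hT00) (fun n hn => ?_) hlim
    ext i j
    rw [hW n hn, hscalar]
    simp
  · refine ⟨T 1 0 / A, div_ne_zero h10 hA, ?_⟩
    have key : A ^ 2 * (T.trace ^ 2 - 4 * T.det) = T 1 0 ^ 2 * (B ^ 2 - 4 * A * C) := by
      rw [Matrix.trace_fin_two, Matrix.det_fin_two]
      linear_combination (-(T 1 0 * B) - A * (T 1 1 - T 0 0)) * h₁ + 4 * A * T 1 0 * h₂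
    field_simp
    linear_combination key

theorem conj_continuants_bounded_general
    (K : Subfield ℝ) (hK : Module.finrank ℚ K = 2)
    (σ : K →+* ℝ)
    (ξ : ℝ) (hquartic : (minpoly ℚ ξ).natDegree = 4)
    (A B C : K) (hA : A ≠ 0)
    (heq : (A : ℝ) * ξ ^ 2 + (B : ℝ) * ξ + (C : ℝ) = 0)
    (hdisc : σ (B ^ 2 - 4 * A * C) < 0)
    (a : ℕ → K)
    (hconv : CFConvergesTo (fun n => (a n : ℝ)) ξ)
    (hper : UltimatelyPeriodic a) :
    ∃ M : ℝ, ∀ n, |σ (cfP a (n + 1))| ≤ M ∧ |σ (cfQ a (n + 1))| ≤ M := by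
  obtain ⟨⟨N₁, hQ⟩, hlim⟩ := (cfConvergesTo_map_iff K.subtype a ξ).1 hconv
  obtain ⟨N₀, k, hk, hper⟩ := hper
  have : FiniteDimensional ℚ K := .of_finrank_pos (by omega)
  have hξ := Subfield.subtype_ne_of_finrank_lt_natDegree_minpoly (K := K) (ξ := ξ) (by omega)
  obtain ⟨T, hdetT, hT⟩ := exists_contMat_add_eq_mul (N := max N₀ N₁) fun n hn => hper n (by omega)
  obtain ⟨c, hc, hTdisc⟩ := exists_trace_sq_sub_four_det_eq K.subtype hξ hA heq (by simp [hdetT])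
    hk hT (fun n hn => hQ n (le_of_max_le_right hn)) hlim
  have hU : (σ.mapMatrix T).trace ^ 2 - 4 * (σ.mapMatrix T).det < 0 :=
    calc (σ.mapMatrix T).trace ^ 2 - 4 * (σ.mapMatrix T).det
        = σ (T.trace ^ 2 - 4 * T.det) := by
          rw [map_sub, map_mul, map_pow, RingHom.map_det, AddMonoidHom.map_trace, map_ofNat]
          rfl
      _ = σ c ^ 2 * σ (B ^ 2 - 4 * A * C) := by rw [hTdisc, map_mul, map_pow]
      _ < 0 := mul_neg_of_pos_of_neg (sq_pos_of_ne_zero ((map_ne_zero σ).2 hc)) hdisc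
  obtain ⟨hU₁, hU₄⟩ := det_eq_one_and_trace_sq_lt_four (k := k)
    (by rw [← RingHom.map_det, hdetT, map_pow, map_neg, map_one]) hU
  have hrec := add_two_mul_eq_trace_smul_sub hU₁ (V := fun n => σ.mapMatrix (contMat a n))
    fun n hn => by rw [hT n hn, map_mul]
  obtain ⟨M₁, hM₁⟩ := exists_abs_le_of_chebyshev_step hU₄ hk (x := fun n => σ (cfP a (n + 1)))
    fun n hn => congrFun (congrFun (hrec n hn) 0) 0
  obtain ⟨M₂, hM₂⟩ := exists_abs_le_of_chebyshev_step hU₄ hk (x := fun n => σ (cfQ a (n + 1)))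
    fun n hn => congrFun (congrFun (hrec n hn) 1) 0
  exact ⟨max M₁ M₂, fun n => ⟨(hM₁ n).trans (le_max_left _ _), (hM₂ n).trans (le_max_right _ _)⟩⟩

/-- if `σ(B² − 4AC) < 0` and the expansion is ultimately periodic,
then `|σ(Pₙ)|` and `|σ(Qₙ)|` are bounded. -/
theorem conj_continuants_bounded
    (K : Subfield ℝ) (hK : Module.finrank ℚ K = 2)
    (σ : K →+* ℝ) (hσ : σ ≠ K.subtype)
    (ξ : ℝ) (hquartic : (minpoly ℚ ξ).natDegree = 4)
    (A B C : K) (hAint : IsIntegral ℤ A) (hBint : IsIntegral ℤ B)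
    (hCint : IsIntegral ℤ C) (hA : A ≠ 0)
    (heq : (A : ℝ) * ξ ^ 2 + (B : ℝ) * ξ + (C : ℝ) = 0)
    (hdisc : σ (B ^ 2 - 4 * A * C) < 0)
    (a : ℕ → K) (ha : ∀ n, IsIntegral ℤ (a n))
    (hconv : CFConvergesTo (fun n => (a n : ℝ)) ξ)
    (hper : UltimatelyPeriodic a) :
    ∃ M : ℝ, ∀ n, |σ (cfP a (n + 1))| ≤ M ∧ |σ (cfQ a (n + 1))| ≤ M :=
  conj_continuants_bounded_general K hK σ ξ hquartic A B C hA heq hdisc a hconv hper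
end

section
/- Suppose σ(B²−4AC) < 0. Then there is no ultimately periodic sequence (a_n)_{n≥0} in O_K with a_n ≥ 1 and σ(a_n) > 0 for all n ≥ 1 whose continued fraction converges to ξ. -/
open Filter Topology

section Aux
variable {R : Type*} [CommRing R] (a : ℕ → R)

lemma cfP_zero : cfP a 0 = 1 := rfl
lemma cfP_one : cfP a 1 = a 0 := rfl
lemma cfP_add_two (n : ℕ) : cfP a (n+2) = a (n+1) * cfP a (n+1) + cfP a n := rfl
lemma cfQ_zero : cfQ a 0 = 0 := rfl
lemma cfQ_one : cfQ a 1 = 1 := rfl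
lemma cfQ_add_two (n : ℕ) : cfQ a (n+2) = a (n+1) * cfQ a (n+1) + cfQ a n := rfl

lemma cf_map {S : Type*} [CommRing S] (f : R →+* S) :
    ∀ n, f (cfP a n) = cfP (fun i => f (a i)) n ∧ f (cfQ a n) = cfQ (fun i => f (a i)) n := by
  have key : ∀ n, (f (cfP a n) = cfP (fun i => f (a i)) n ∧ f (cfQ a n) = cfQ (fun i => f (a i)) n)
      ∧ (f (cfP a (n+1)) = cfP (fun i => f (a i)) (n+1) ∧ f (cfQ a (n+1)) = cfQ (fun i => f (a i)) (n+1)) := by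
    intro n
    induction n with
    | zero => simp [cfP, cfQ]
    | succ n ih =>
      refine ⟨ih.2, ?_, ?_⟩
      · show f (cfP a (n+2)) = cfP (fun i => f (a i)) (n+2)
        rw [cfP_add_two, cfP_add_two, map_add, map_mul, ih.2.1, ih.1.1]
      · show f (cfQ a (n+2)) = cfQ (fun i => f (a i)) (n+2)
        rw [cfQ_add_two, cfQ_add_two, map_add, map_mul, ih.2.2, ih.1.2]
  exact fun n => (key n).1

lemma cf_det : ∀ n, cfP a (n+1) * cfQ a n - cfP a n * cfQ a (n+1) = (-1)^(n+1) := by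
  intro n
  induction n with
  | zero => simp [cfP, cfQ]
  | succ n ih =>
    show cfP a (n+2) * cfQ a (n+1) - cfP a (n+1) * cfQ a (n+2) = (-1)^(n+2)
    rw [cfP_add_two, cfQ_add_two, pow_succ]
    linear_combination (-1 : R) * ih

lemma cf_comp (m : ℕ) (F : ℕ → R) (hF : ∀ n, F (n+2) = a (n+1) * F (n+1) + F n) :
    ∀ j, F (m+1+j) = F (m+1) * cfP (fun i => a (m+1+i)) j + F m * cfQ (fun i => a (m+1+i)) j := by
  set c : ℕ → R := fun i => a (m+1+i) with hc
  have key : ∀ j, (F (m+1+j) = F (m+1) * cfP c j + F m * cfQ c j)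
      ∧ (F (m+1+(j+1)) = F (m+1) * cfP c (j+1) + F m * cfQ c (j+1)) := by
    intro j
    induction j with
    | zero =>
      refine ⟨by simp [cfP, cfQ], ?_⟩
      have h3 : c 0 = a (m+1) := by rw [hc]
      show F (m+2) = F (m+1) * cfP c 1 + F m * cfQ c 1
      rw [cfP_one, cfQ_one, h3, hF m]
      ring
    | succ j ih =>
      refine ⟨ih.2, ?_⟩
      have e1 : m+1+(j+1+1) = (m+j+1)+2 := by omega
      have e2 : (m+j+1)+1 = m+1+(j+1) := by omega
      have e3 : m+j+1 = m+1+j := by omega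
      have e4 : c (j+1) = a (m+j+2) := by
        rw [hc]; show a (m+1+(j+1)) = a (m+j+2); congr 1; omega
      have e6 : m+1+(j+1) = m+j+2 := by omega
      rw [e1, hF (m+j+1), e2, e3, ih.1, ih.2]
      show _ = F (m+1) * cfP c (j+2) + F m * cfQ c (j+2)
      rw [cfP_add_two, cfQ_add_two, e4, e6]
      ring
  exact fun j => (key j).1

end Aux

lemma cfQ_pos (b : ℕ → ℝ) (hb : ∀ i, 1 ≤ i → 1 ≤ b i) :
    ∀ n, 0 ≤ cfQ b n ∧ (1 ≤ n → 1 ≤ cfQ b n) := by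
  have key : ∀ n, (0 ≤ cfQ b n ∧ (1 ≤ n → 1 ≤ cfQ b n))
      ∧ (0 ≤ cfQ b (n+1) ∧ (1 ≤ n+1 → 1 ≤ cfQ b (n+1))) := by
    intro n
    induction n with
    | zero => simp [cfQ]
    | succ n ih =>
      refine ⟨ih.2, ?_, fun _ => ?_⟩ <;>
      · show (_ : Prop)
        rw [show n+1+1 = n+2 from rfl, cfQ_add_two]
        nlinarith [ih.1.1, ih.2.1, ih.2.2 (by omega : 1 ≤ n+1), hb (n+1) (by omega)]
  exact fun n => (key n).1

lemma cfP_ge_one (b : ℕ → ℝ) (hb : ∀ i, 1 ≤ b i) : ∀ n, 1 ≤ cfP b n := by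
  have key : ∀ n, 1 ≤ cfP b n ∧ 1 ≤ cfP b (n+1) := by
    intro n
    induction n with
    | zero => exact ⟨le_refl _, hb 0⟩
    | succ n ih =>
      refine ⟨ih.2, ?_⟩
      show 1 ≤ cfP b (n+2)
      rw [cfP_add_two]
      nlinarith [ih.1, ih.2, hb (n+1)]
  exact fun n => (key n).1

lemma cf_nonneg (b : ℕ → ℝ) (hb : ∀ i, 0 ≤ b i) :
    ∀ n, 0 ≤ cfP b n ∧ 0 ≤ cfQ b n := by
  have key : ∀ n, (0 ≤ cfP b n ∧ 0 ≤ cfQ b n) ∧ (0 ≤ cfP b (n+1) ∧ 0 ≤ cfQ b (n+1)) := by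
    intro n
    induction n with
    | zero => simp [cfP, cfQ]; exact hb 0
    | succ n ih =>
      refine ⟨ih.2, ?_, ?_⟩
      · show 0 ≤ cfP b (n+2)
        rw [cfP_add_two]; nlinarith [ih.1.1, ih.2.1, hb (n+1)]
      · show 0 ≤ cfQ b (n+2)
        rw [cfQ_add_two]; nlinarith [ih.1.2, ih.2.2, hb (n+1)]
  exact fun n => (key n).1

lemma xi_notMem (K : Subfield ℝ) (hK : Module.finrank ℚ K = 2)
    (ξ : ℝ) (hq : (minpoly ℚ ξ).natDegree = 4) : ∀ y : K, (y : ℝ) ≠ ξ := by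
  intro y hy
  have hfd : FiniteDimensional ℚ K := Module.finite_of_finrank_pos (by rw [hK]; norm_num)
  have hinj : Function.Injective ⇑(K.subtype.toRatAlgHom : K →ₐ[ℚ] ℝ) := Subtype.coe_injective
  have h1 : minpoly ℚ ((K.subtype.toRatAlgHom : K →ₐ[ℚ] ℝ) y) = minpoly ℚ y :=
    minpoly.algHom_eq _ hinj y
  have h2 : (K.subtype.toRatAlgHom : K →ₐ[ℚ] ℝ) y = ξ := hy
  rw [h2] at h1
  have h3 : (minpoly ℚ y).natDegree ≤ 2 := hK ▸ minpoly.natDegree_le y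
  rw [← h1, hq] at h3
  omega


/-- if `σ(B² − 4AC) < 0`, there is no ultimately periodic expansion of `ξ`
with partial quotients `aₙ ≥ 1`, `σ(aₙ) > 0`. -/
theorem no_periodic_expansion_of_neg_conj_disc
    (K : Subfield ℝ) (hK : Module.finrank ℚ K = 2)
    (σ : K →+* ℝ) (hσ : σ ≠ K.subtype)
    (ξ : ℝ) (hquartic : (minpoly ℚ ξ).natDegree = 4)
    (A B C : K) (hAint : IsIntegral ℤ A) (hBint : IsIntegral ℤ B)
    (hCint : IsIntegral ℤ C) (hA : A ≠ 0)
    (heq : (A : ℝ) * ξ ^ 2 + (B : ℝ) * ξ + (C : ℝ) = 0)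
    (hdisc : σ (B ^ 2 - 4 * A * C) < 0) :
    ¬∃ a : ℕ → K, (∀ n, IsIntegral ℤ (a n)) ∧
      (∀ n : ℕ, 1 ≤ n → (1 : ℝ) ≤ (↑(a n) : ℝ) ∧ 0 < σ (a n)) ∧
      UltimatelyPeriodic a ∧
      CFConvergesTo (fun n => (a n : ℝ)) ξ := by
  rintro ⟨a, haint, hpos, ⟨N, k, hk1, hper⟩, hQne, htend⟩
  obtain ⟨k', rfl⟩ : ∃ k'', k = k'' + 1 := ⟨k - 1, by omega⟩
  set m := N + 1 with hm
  set ar : ℕ → ℝ := fun n => ((a n : K) : ℝ) with har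
  set k := k' + 1 with hkdef
  have hξK : ∀ y : K, (y : ℝ) ≠ ξ := xi_notMem K hK ξ hquartic
  set c : ℕ → K := fun i => a (m+1+i) with hc
  set cr : ℕ → ℝ := fun i => ar (m+1+i) with hcr
  -- coercion lemmas
  have coeP : ∀ n, ((cfP a n : K) : ℝ) = cfP ar n := fun n => (cf_map a K.subtype n).1
  have coeQ : ∀ n, ((cfQ a n : K) : ℝ) = cfQ ar n := fun n => (cf_map a K.subtype n).2
  have coePc : ∀ n, ((cfP c n : K) : ℝ) = cfP cr n := fun n => (cf_map c K.subtype n).1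
  have coeQc : ∀ n, ((cfQ c n : K) : ℝ) = cfQ cr n := fun n => (cf_map c K.subtype n).2
  -- positivity
  have har1 : ∀ i, 1 ≤ i → 1 ≤ ar i := fun i hi => (hpos i hi).1
  have hQr := cfQ_pos ar har1
  have hcr1 : ∀ i, 1 ≤ cr i := fun i => har1 (m+1+i) (by omega)
  have hqc := cfQ_pos cr (fun i _ => hcr1 i)
  -- nonvanishing denominators
  have hdeno : ∀ n : ℕ, cfP ar (n+1) - cfQ ar (n+1) * ξ ≠ 0 := by
    intro n h0
    rw [← coeP, ← coeQ] at h0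
    by_cases hq : cfQ a (n+1) = 0
    · have hp : cfP a (n+1) = 0 := by
        have : ((cfP a (n+1) : K) : ℝ) = 0 := by rw [hq] at h0; push_cast at h0; linarith
        exact_mod_cast this
      have hdet := cf_det a n
      rw [hp, hq] at hdet
      simp at hdet
      exact pow_ne_zero (n+1) (by norm_num : (-1 : K) ≠ 0) hdet.symm
    · apply hξK (cfP a (n+1) / cfQ a (n+1))
      have hqr : ((cfQ a (n+1) : K) : ℝ) ≠ 0 := fun h => hq (by exact_mod_cast h)
      push_cast
      rw [div_eq_iff hqr]
      linarith [h0]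
  -- composition identities over ℝ
  have compPm : ∀ j, cfP ar (m+1+j) = cfP ar (m+1) * cfP cr j + cfP ar m * cfQ cr j :=
    cf_comp ar m (cfP ar) (fun n => rfl)
  have compQm : ∀ j, cfQ ar (m+1+j) = cfQ ar (m+1) * cfP cr j + cfQ ar m * cfQ cr j :=
    cf_comp ar m (cfQ ar) (fun n => rfl)
  have hcc : (fun i => ar (m+k+1+i)) = cr := by
    funext i
    show ((a (m+k+1+i) : K) : ℝ) = ((a (m+1+i) : K) : ℝ)
    have e : m+k+1+i = (m+1+i)+k := by omega
    rw [e, hper (m+1+i) (by omega)]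
  have compPmk : ∀ j, cfP ar (m+k+1+j) = cfP ar (m+k+1) * cfP cr j + cfP ar (m+k) * cfQ cr j := by
    have h := cf_comp ar (m+k) (cfP ar) (fun n => rfl)
    rw [hcc] at h
    exact h
  have compQmk : ∀ j, cfQ ar (m+k+1+j) = cfQ ar (m+k+1) * cfP cr j + cfQ ar (m+k) * cfQ cr j := by
    have h := cf_comp ar (m+k) (cfQ ar) (fun n => rfl)
    rw [hcc] at h
    exact h
  -- determinants over ℝ
  have hdR : cfP ar (m+1) * cfQ ar m - cfP ar m * cfQ ar (m+1) = (-1)^(m+1) := cf_det ar m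
  have hdRne : cfP ar (m+1) * cfQ ar m - cfP ar m * cfQ ar (m+1) ≠ 0 := by
    rw [hdR]; exact pow_ne_zero _ (by norm_num)
  have hdR' : cfP ar (m+k+1) * cfQ ar (m+k) - cfP ar (m+k) * cfQ ar (m+k+1) = (-1)^(m+k+1) :=
    cf_det ar (m+k)
  have hdRne' : cfP ar (m+k+1) * cfQ ar (m+k) - cfP ar (m+k) * cfQ ar (m+k+1) ≠ 0 := by
    rw [hdR']; exact pow_ne_zero _ (by norm_num)
  -- convergents tendsto
  have hx : Tendsto (fun j => cfP ar (m+1+(j+1)) / cfQ ar (m+1+(j+1))) atTop (nhds ξ) := by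
    have h := htend.comp (tendsto_add_atTop_nat (m+1))
    refine h.congr fun j => ?_
    show cfP ar (j+(m+1)+1) / cfQ ar (j+(m+1)+1) = _
    rw [show j+(m+1)+1 = m+1+(j+1) from by omega]
  have hx' : Tendsto (fun j => cfP ar (m+k+1+(j+1)) / cfQ ar (m+k+1+(j+1))) atTop (nhds ξ) := by
    have h := htend.comp (tendsto_add_atTop_nat (m+k+1))
    refine h.congr fun j => ?_
    show cfP ar (j+(m+k+1)+1) / cfQ ar (j+(m+k+1)+1) = _
    rw [show j+(m+k+1)+1 = m+k+1+(j+1) from by omega]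
  have hden : cfP ar (m+1) - cfQ ar (m+1) * ξ ≠ 0 := hdeno m
  have hden' : cfP ar (m+k+1) - cfQ ar (m+k+1) * ξ ≠ 0 := by
    have := hdeno (m+k)
    rwa [show m+k+1 = m+k+1 from rfl] at this
  -- tail limit from two starting points
  have key : ∀ (M : ℕ), (∀ j, cfP ar (M+1+j) = cfP ar (M+1) * cfP cr j + cfP ar M * cfQ cr j) →
      (∀ j, cfQ ar (M+1+j) = cfQ ar (M+1) * cfP cr j + cfQ ar M * cfQ cr j) →
      (cfP ar (M+1) * cfQ ar M - cfP ar M * cfQ ar (M+1) ≠ 0) →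
      (1 ≤ M) →
      Tendsto (fun j => cfP ar (M+1+(j+1)) / cfQ ar (M+1+(j+1))) atTop (nhds ξ) →
      (cfP ar (M+1) - cfQ ar (M+1) * ξ ≠ 0) →
      Tendsto (fun j => cfP cr (j+1) / cfQ cr (j+1)) atTop
        (nhds ((cfQ ar M * ξ - cfP ar M) / (cfP ar (M+1) - cfQ ar (M+1) * ξ))) := by
    intro M hcP hcQ hdne hM hxM hdenM
    have hlim : Tendsto
        (fun j => (cfQ ar M * (cfP ar (M+1+(j+1)) / cfQ ar (M+1+(j+1))) - cfP ar M) /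
          (cfP ar (M+1) - cfQ ar (M+1) * (cfP ar (M+1+(j+1)) / cfQ ar (M+1+(j+1))))) atTop
        (nhds ((cfQ ar M * ξ - cfP ar M) / (cfP ar (M+1) - cfQ ar (M+1) * ξ))) :=
      Tendsto.div ((tendsto_const_nhds.mul hxM).sub tendsto_const_nhds)
        (tendsto_const_nhds.sub (tendsto_const_nhds.mul hxM)) hdenM
    refine hlim.congr fun j => ?_
    have hq1 : (1:ℝ) ≤ cfQ cr (j+1) := (hqc (j+1)).2 (by omega)
    have hD : (1:ℝ) ≤ cfQ ar (M+1+(j+1)) := (hQr (M+1+(j+1))).2 (by omega)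
    have hDne : cfQ ar (M+1+(j+1)) ≠ 0 := by linarith
    have hqne : cfQ cr (j+1) ≠ 0 := by linarith
    have hp := hcP (j+1)
    have hq := hcQ (j+1)
    have h1 : cfQ ar M * (cfP ar (M+1+(j+1)) / cfQ ar (M+1+(j+1))) - cfP ar M
        = ((cfP ar (M+1) * cfQ ar M - cfP ar M * cfQ ar (M+1)) * cfP cr (j+1)) / cfQ ar (M+1+(j+1)) := by
      rw [eq_div_iff hDne]
      field_simp
      linear_combination cfQ ar M * hp - cfP ar M * hq
    have h2 : cfP ar (M+1) - cfQ ar (M+1) * (cfP ar (M+1+(j+1)) / cfQ ar (M+1+(j+1)))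
        = ((cfP ar (M+1) * cfQ ar M - cfP ar M * cfQ ar (M+1)) * cfQ cr (j+1)) / cfQ ar (M+1+(j+1)) := by
      rw [eq_div_iff hDne]
      field_simp
      linear_combination cfP ar (M+1) * hq - cfQ ar (M+1) * hp
    rw [h1, h2]
    field_simp
  have hu := key m compPm compQm hdRne (by omega) hx hden
  have hu' := key (m+k) compPmk compQmk hdRne' (by omega) hx' hden'
  have θeq := tendsto_nhds_unique hu hu'
  have hcross : (cfQ ar m * ξ - cfP ar m) * (cfP ar (m+k+1) - cfQ ar (m+k+1) * ξ)
      = (cfQ ar (m+k) * ξ - cfP ar (m+k)) * (cfP ar (m+1) - cfQ ar (m+1) * ξ) := by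
    rw [div_eq_div_iff hden hden'] at θeq
    exact θeq
  -- substitution identities
  have hsPk1 : cfP ar (m+k+1) = cfP ar (m+1) * cfP cr k + cfP ar m * cfQ cr k := by
    have := compPm k; rwa [show m+1+k = m+k+1 from by omega] at this
  have hsQk1 : cfQ ar (m+k+1) = cfQ ar (m+1) * cfP cr k + cfQ ar m * cfQ cr k := by
    have := compQm k; rwa [show m+1+k = m+k+1 from by omega] at this
  have hsPk0 : cfP ar (m+k) = cfP ar (m+1) * cfP cr k' + cfP ar m * cfQ cr k' := by
    have := compPm k'; rwa [show m+1+k' = m+k from by omega] at this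
  have hsQk0 : cfQ ar (m+k) = cfQ ar (m+1) * cfP cr k' + cfQ ar m * cfQ cr k' := by
    have := compQm k'; rwa [show m+1+k' = m+k from by omega] at this
  rw [hsPk1, hsQk1, hsPk0, hsQk0] at hcross
  -- the quadratic satisfied by ξ, real version
  have hmainR :
      (cfQ cr k * (cfQ ar m)^2 - (cfQ cr k' - cfP cr k) * cfQ ar m * cfQ ar (m+1) - cfP cr k' * (cfQ ar (m+1))^2) * ξ^2
      + (-2 * cfQ cr k * cfQ ar m * cfP ar m + (cfQ cr k' - cfP cr k) * (cfQ ar m * cfP ar (m+1) + cfP ar m * cfQ ar (m+1)) + 2 * cfP cr k' * cfQ ar (m+1) * cfP ar (m+1)) * ξ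
      + (cfQ cr k * (cfP ar m)^2 - (cfQ cr k' - cfP cr k) * cfP ar m * cfP ar (m+1) - cfP cr k' * (cfP ar (m+1))^2) = 0 := by
    linear_combination -hcross
  -- K-level quadratic coefficients
  set AA : K := cfQ c k * (cfQ a m)^2 - (cfQ c k' - cfP c k) * cfQ a m * cfQ a (m+1)
      - cfP c k' * (cfQ a (m+1))^2 with hAA
  set BB : K := -2 * cfQ c k * cfQ a m * cfP a m
      + (cfQ c k' - cfP c k) * (cfQ a m * cfP a (m+1) + cfP a m * cfQ a (m+1))
      + 2 * cfP c k' * cfQ a (m+1) * cfP a (m+1) with hBB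
  set CC : K := cfQ c k * (cfP a m)^2 - (cfQ c k' - cfP c k) * cfP a m * cfP a (m+1)
      - cfP c k' * (cfP a (m+1))^2 with hCC
  have hmainK : (AA : ℝ) * ξ^2 + (BB : ℝ) * ξ + (CC : ℝ) = 0 := by
    rw [hAA, hBB, hCC]
    push_cast
    simp only [coeP, coeQ, coePc, coeQc, show ((2:K):ℝ) = (2:ℝ) from by norm_cast]
    linear_combination hmainR
  have hdK := cf_det a m
  have hd2 : (cfP a (m+1) * cfQ a m - cfP a m * cfQ a (m+1))^2 = 1 := by
    rw [hdK, ← pow_mul, show (m+1)*2 = 2*(m+1) from by ring, pow_mul]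
    norm_num
  have I1 : AA * (cfP a (m+1))^2 + BB * (cfP a (m+1)) * (cfQ a (m+1)) + CC * (cfQ a (m+1))^2
      = (cfP a (m+1) * cfQ a m - cfP a m * cfQ a (m+1))^2 * cfQ c k := by
    rw [hAA, hBB, hCC]; ring
  have hdiscK : BB^2 - 4*AA*CC = (cfQ c k' - cfP c k)^2 + 4*(cfQ c k)*(cfP c k') := by
    rw [hAA, hBB, hCC]
    linear_combination ((cfQ c k' - cfP c k)^2 + 4*(cfQ c k)*(cfP c k')) * hd2
  clear_value AA BB CC
  have hσinj : Function.Injective σ := σ.injective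
  by_cases hAA0 : AA = 0
  · -- degenerate case: the quadratic for ξ must vanish identically, contradiction
    have hAAr : (AA : ℝ) = 0 := by rw [hAA0]; simp
    have hBB0 : BB = 0 := by
      by_contra hB0
      apply hξK (-CC/BB)
      have hBBr : (BB : ℝ) ≠ 0 := fun h => hB0 (by exact_mod_cast h)
      push_cast
      rw [div_eq_iff hBBr]
      linear_combination ξ^2 * hAAr - hmainK
    have hCC0 : CC = 0 := by
      rw [hAA0, hBB0] at hmainK
      simpa using hmainK
    rw [hAA0, hBB0, hCC0, hd2, one_mul] at I1
    have hγr : ((cfQ c k : K) : ℝ) = 0 := by rw [← I1]; simp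
    rw [coeQc k] at hγr
    have : (1:ℝ) ≤ cfQ cr k := (hqc k).2 (by omega)
    linarith
  · -- nondegenerate case: compare with A, B, C
    have hAAr : (AA : ℝ) ≠ 0 := fun h => hAA0 (by exact_mod_cast h)
    have helim1 : AA * B - A * BB = 0 := by
      by_contra hne
      apply hξK ((A*CC - AA*C)/(AA*B - A*BB))
      have hner : ((AA*B - A*BB : K) : ℝ) ≠ 0 := fun h => hne (by exact_mod_cast h)
      push_cast at hner ⊢
      rw [div_eq_iff hner]
      linear_combination (A:ℝ) * hmainK - (AA:ℝ) * heq
    have helim2 : AA * C - A * CC = 0 := by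
      have h1r : ((AA*B - A*BB : K) : ℝ) = 0 := by rw [helim1]; simp
      have h2r : ((AA*C - A*CC : K) : ℝ) = 0 := by
        push_cast at h1r ⊢
        linear_combination (AA:ℝ) * heq - (A:ℝ) * hmainK - ξ * h1r
      exact_mod_cast h2r
    have hdisc2 : A^2 * (BB^2 - 4*AA*CC) = AA^2 * (B^2 - 4*A*C) := by
      linear_combination (-(A*BB + AA*B)) * helim1 + (4*A*AA) * helim2
    have hσA : σ A ≠ 0 := fun h => hA (hσinj (by rw [h, map_zero]))
    have hσAA : σ AA ≠ 0 := fun h => hAA0 (hσinj (by rw [h, map_zero]))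
    have hσc : ∀ i, (0:ℝ) ≤ σ (c i) := fun i => (hpos (m+1+i) (by omega)).2.le
    have hnn := cf_nonneg (fun i => σ (c i)) hσc
    have hσγ : 0 ≤ σ (cfQ c k) := by rw [(cf_map c σ k).2]; exact (hnn k).2
    have hσβ : 0 ≤ σ (cfP c k') := by rw [(cf_map c σ k').1]; exact (hnn k').1
    have hs1 : σ (BB^2 - 4*AA*CC)
        = (σ (cfQ c k') - σ (cfP c k))^2 + 4 * σ (cfQ c k) * σ (cfP c k') := by
      rw [hdiscK]
      simp only [map_add, map_sub, map_mul, map_pow, map_ofNat]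
    have hs2 : σ A ^ 2 * σ (BB^2 - 4*AA*CC) = σ AA ^ 2 * σ (B^2 - 4*A*C) := by
      rw [← map_pow, ← map_pow, ← map_mul, ← map_mul, hdisc2]
    set w1 : ℝ := σ (cfQ c k') with hw1
    set w2 : ℝ := σ (cfP c k) with hw2
    set w3 : ℝ := σ (cfQ c k) with hw3
    set w4 : ℝ := σ (cfP c k') with hw4
    set v1 : ℝ := σ (BB^2 - 4*AA*CC) with hv1
    set v2 : ℝ := σ (B^2 - 4*A*C) with hv2
    set vA : ℝ := σ A with hvA
    set vAA : ℝ := σ AA with hvAA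
    clear_value w1 w2 w3 w4 v1 v2 vA vAA
    have hge : 0 ≤ v1 := by
      rw [hs1]
      have h1 := sq_nonneg (w1 - w2)
      have h2 := mul_nonneg hσγ hσβ
      linarith only [h1, h2]
    have hlt : vAA ^ 2 * v2 < 0 :=
      mul_neg_of_pos_of_neg (pow_two_pos_of_ne_zero hσAA) hdisc
    have h3 : 0 ≤ vA ^ 2 * v1 := mul_nonneg (sq_nonneg _) hge
    rw [hs2] at h3
    linarith only [h3, hlt]
end

section
/- Let β = (1+√5)/2. For every (x, y) ∈ ℝ² there exist integers m, n ∈ ℤ such that (x − (m + n·β))² + (y − (m − n/β))² ≤ 9/10. In other words, every point of the plane lies within distance √(9/10) < 1 of a point of the lattice {(a, σ(a)) : a ∈ ℤ[β]}, where σ(m + n·β) = m − n/β. -/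
open Filter Topology

private lemma quarter_lemma (s b r : ℝ) (hs : s^2 = 5) (hs2 : 2 ≤ s) (hb0 : 0 ≤ b) (hb1 : b ≤ 1)
    (hr0 : 0 ≤ r) (h : b + s*r ≤ 3) : b^2 + r^2 ≤ 9/5 := by
  have hsr : 0 ≤ s * r := mul_nonneg (by linarith) hr0
  rcases le_or_gt (s*r) 2 with h2 | h2
  · nlinarith [mul_nonneg (sub_nonneg.2 h2) (by linarith : (0:ℝ) ≤ 2 + s*r),
      mul_nonneg hb0 (sub_nonneg.2 hb1)]
  · nlinarith [mul_nonneg hb0 (sub_nonneg.2 hb1),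
      mul_nonneg (by linarith : (0:ℝ) ≤ s*r - 2) (by linarith : (0:ℝ) ≤ 3 - s*r)]

private lemma two_disks (s a t : ℝ) (hs : s^2 = 5) (hs2 : 2 ≤ s) (ha0 : 0 ≤ a) (ha1 : a ≤ 1)
    (ht0 : 0 ≤ t) (hts : t ≤ s) :
    a^2 + t^2 ≤ 9/5 ∨ (1-a)^2 + (s-t)^2 ≤ 9/5 := by
  rcases le_or_gt (a + s*t) 3 with h | h
  · exact Or.inl (quarter_lemma s a t hs hs2 ha0 ha1 ht0 h)
  · refine Or.inr (quarter_lemma s (1-a) (s-t) hs hs2 (by linarith) (by linarith) (by linarith) ?_)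
    nlinarith

/-- every point of `ℝ²` is within distance `√(9/10) < 1` of a point of the
lattice `{(a, σ(a)) : a ∈ ℤ[β]}`, `β = (1+√5)/2`. -/
theorem golden_lattice_covering (β : ℝ) (hβ : β = (1 + Real.sqrt 5) / 2) :
    ∀ x y : ℝ, ∃ m n : ℤ,
      (x - (m + n * β)) ^ 2 + (y - (m - n / β)) ^ 2 ≤ 9 / 10 := by
  intro x y
  set s : ℝ := Real.sqrt 5 with hsdef
  have hs : s^2 = 5 := Real.sq_sqrt (by norm_num)
  have hs2 : 2 ≤ s := by nlinarith [Real.sqrt_nonneg 5]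
  have hspos : 0 < s := by linarith
  have hβpos : 0 < β := by rw [hβ]; linarith
  have hβinv : (1:ℝ)/β = β - 1 := by
    rw [eq_sub_iff_add_eq, div_add' _ _ _ (ne_of_gt hβpos), div_eq_iff (ne_of_gt hβpos)]
    rw [hβ]; ring_nf; nlinarith
  -- distance formula
  have dist_eq : ∀ m n : ℤ, (x - (m + n * β)) ^ 2 + (y - (m - n / β)) ^ 2
      = ((x + y - 2*m - n)^2 + (x - y - n*s)^2) / 2 := by
    intro m n
    have h1 : (n:ℝ) / β = n * (β - 1) := by
      rw [div_eq_mul_inv, ← one_div, hβinv]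
    rw [h1, hβ]
    ring
  -- choose n0 and m1
  set n0 : ℤ := ⌊(x - y)/s⌋ with hn0
  set t : ℝ := x - y - n0 * s with htdef
  have ht0 : 0 ≤ t := by
    have h1 : (n0:ℝ) ≤ (x - y)/s := Int.floor_le ((x - y)/s)
    have h2 : (n0:ℝ) * s ≤ x - y := by
      rw [← le_div_iff₀ hspos]; exact h1
    linarith
  have hts : t ≤ s := by
    have := Int.lt_floor_add_one ((x - y)/s)
    have h2 : x - y < (n0 + 1 : ℝ) * s := by
      rw [← div_lt_iff₀ hspos]; push_cast; linarith [Int.lt_floor_add_one ((x - y)/s)]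
    push_cast at h2; nlinarith
  set m1 : ℤ := round ((x + y - n0)/2) with hm1
  set sA : ℝ := x + y - n0 - 2 * m1 with hsA
  have hsA1 : |sA| ≤ 1 := by
    have := abs_sub_round ((x + y - n0)/2)
    have h2 : |(x + y - n0)/2 - m1| ≤ 1/2 := this
    rw [abs_le] at h2 ⊢
    constructor <;> [linarith [h2.1]; linarith [h2.2]]
  rcases le_or_gt 0 sA with hpos | hneg
  · have ha1 : sA ≤ 1 := (abs_le.1 hsA1).2
    rcases two_disks s sA t hs hs2 hpos ha1 ht0 hts with h | h
    · refine ⟨m1, n0, ?_⟩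
      rw [dist_eq]
      have e1 : x + y - 2*m1 - n0 = sA := by rw [hsA]; ring
      have e2 : x - y - n0 * s = t := by rw [htdef]
      rw [e1, e2]; linarith
    · refine ⟨m1, n0 + 1, ?_⟩
      rw [dist_eq]
      have e1 : x + y - 2*m1 - (↑(n0+1):ℝ) = sA - 1 := by push_cast; rw [hsA]; ring
      have e2 : x - y - (↑(n0+1):ℝ) * s = t - s := by push_cast; rw [htdef]; ring
      rw [e1, e2]
      nlinarith [h]
  · have ha0 : 0 ≤ -sA := by linarith
    have ha1 : -sA ≤ 1 := by have := (abs_le.1 hsA1).1; linarith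
    rcases two_disks s (-sA) t hs hs2 ha0 ha1 ht0 hts with h | h
    · refine ⟨m1, n0, ?_⟩
      rw [dist_eq]
      have e1 : x + y - 2*m1 - n0 = sA := by rw [hsA]; ring
      have e2 : x - y - n0 * s = t := by rw [htdef]
      rw [e1, e2]; nlinarith [h]
    · refine ⟨m1 - 1, n0 + 1, ?_⟩
      rw [dist_eq]
      have e1 : x + y - 2*(↑(m1-1):ℝ) - (↑(n0+1):ℝ) = sA + 1 := by push_cast; rw [hsA]; ring
      have e2 : x - y - (↑(n0+1):ℝ) * s = t - s := by push_cast; rw [htdef]; ring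
      rw [e1, e2]
      nlinarith [h]
end
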